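/- Let f be a smooth complex-valued function on an open subset of ℂ. Then for every k ≥ 1, det_{k+1}(f) · det_{k−1}(f) = det_k(f) · ∂_z∂_{z̄}(det_k(f)) − ∂_z(det_k(f)) · ∂_{z̄}(det_k(f)). -/

import Mathlib

/-!
Let `M = (∂_z^p ∂_z̄^q f)_{p,q ≥ 0}`, so that `det_k f` is the leading `k × k` principal minor
of `M`. Since `∂_z` and `∂_z̄` commute on smooth functions, `∂_z̄` (resp. `∂_z`) of a minor of `M`
is the sum of the minors obtained by raising one column (resp. row) index by one; for a leading
minor every such shift but the last repeats a column (row). Hence `∂_z̄ det_k`, `∂_z det_k` and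
`∂_z ∂_z̄ det_k` are the minors of the leading `(k+1) × (k+1)` block `A` with row `k` and column
`k - 1`, row `k - 1` and column `k`, or row and column `k - 1` deleted, and the recursion is the
Desnanot–Jacobi identity for `A`.
-/

open Complex Finset MeasureTheory

noncomputable section

/-- Wirtinger derivative `∂_z = (∂_x - i ∂_y)/2` of a function `f : ℂ → ℂ`,
identifying `ℝ²` with `ℂ`. -/
def wdz (f : ℂ → ℂ) (z : ℂ) : ℂ :=
  (fderiv ℝ f z 1 - Complex.I * fderiv ℝ f z Complex.I) / 2

/-- Wirtinger derivative `∂_z̄ = (∂_x + i ∂_y)/2`. -/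
def wdzbar (f : ℂ → ℂ) (z : ℂ) : ℂ :=
  (fderiv ℝ f z 1 + Complex.I * fderiv ℝ f z Complex.I) / 2

/-- Laplacian `Δ = ∂_xx + ∂_yy` of a real-valued function on `ℂ ≃ ℝ²`. -/
def lap (u : ℂ → ℝ) (z : ℂ) : ℝ :=
  fderiv ℝ (fun w => fderiv ℝ u w 1) z 1 +
    fderiv ℝ (fun w => fderiv ℝ u w Complex.I) z Complex.I

/-- Cartan matrix of SU(n+1) (entries indexed by `1 ≤ i, j ≤ n`):
`a_{ii} = 2`, `a_{ij} = -1` if `|i - j| = 1`, `a_{ij} = 0` otherwise. -/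
def cartan (i j : ℕ) : ℝ :=
  if i = j then 2 else if i + 1 = j ∨ j + 1 = i then -1 else 0

/-- Entries of the inverse Cartan matrix: `a^{ij} = min(i,j)·(n+1−max(i,j))/(n+1)`. -/
def cartanInv (n i j : ℕ) : ℝ :=
  (min i j : ℝ) * ((n : ℝ) + 1 - (max i j : ℝ)) / ((n : ℝ) + 1)

/-- `U_i = Σ_{j=1}^n a^{ij} u_j` with the convention `U_i = 0` for `i ∉ {1,…,n}`. -/
def Ufun (n : ℕ) (u : ℕ → ℂ → ℝ) (i : ℕ) (z : ℂ) : ℝ :=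
  if 1 ≤ i ∧ i ≤ n then ∑ j ∈ Finset.Icc 1 n, cartanInv n i j * u j z else 0

/-- `U_i` viewed as a complex-valued function. -/
def UfunC (n : ℕ) (u : ℕ → ℂ → ℝ) (i : ℕ) : ℂ → ℂ := fun z => (Ufun n u i z : ℂ)

/-- `α_i = Σ_{j=1}^n a^{ij} γ_j`. -/
def alph (n : ℕ) (γ : ℕ → ℝ) (i : ℕ) : ℝ :=
  ∑ j ∈ Finset.Icc 1 n, cartanInv n i j * γ j

/-- The invariants `W_k^j`:  `W_0^j = 0`, `W_1^j = −e^{U_1} ∂_z^{j+1}(e^{−U_1})`,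
`W_{k+1}^j = −(∂_z̄ W_k^j)/(∂_z ∂_z̄ U_k)`. -/
def Wk (n : ℕ) (u : ℕ → ℂ → ℝ) : ℕ → ℕ → ℂ → ℂ
  | 0, _ => fun _ => 0
  | 1, j => fun z =>
      -Complex.exp ((Ufun n u 1 z : ℝ) : ℂ) *
        wdz^[j + 1] (fun w => Complex.exp (-((Ufun n u 1 w : ℝ) : ℂ))) z
  | (k + 2), j => fun z =>
      -(wdzbar (Wk n u (k + 1) j) z) / wdz (wdzbar (UfunC n u (k + 1))) z

/-- A solution of the `SU(n+1)` Toda system without sources: smooth functions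
`u_1, …, u_n : ℝ² → ℝ` with `Δu_i + Σ_j a_{ij} e^{u_j} = 0` on `ℝ²` and
`∫_{ℝ²} e^{u_i} < ∞`. -/
def IsTodaSolution (n : ℕ) (u : ℕ → ℂ → ℝ) : Prop :=
  ∀ i ∈ Finset.Icc 1 n,
    ContDiff ℝ (⊤ : ℕ∞) (u i) ∧
    (∀ z : ℂ, lap (u i) z + ∑ j ∈ Finset.Icc 1 n, cartan i j * Real.exp (u j z) = 0) ∧
    MeasureTheory.Integrable (fun z : ℂ => Real.exp (u i z))

/-- A solution of the `SU(n+1)` Toda system with singular source `4πγ_iδ_0`: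
smooth on `ℂ∖{0}`, `Δu_i + Σ_j a_{ij} e^{u_j} = 0` off the origin,
`u_i(z) − 2γ_i log|z|` bounded near `0`, and `∫ e^{u_i} < ∞`. -/
def IsSingularTodaSolution (n : ℕ) (γ : ℕ → ℝ) (u : ℕ → ℂ → ℝ) : Prop :=
  ∀ i ∈ Finset.Icc 1 n,
    ContDiffOn ℝ (⊤ : ℕ∞) (u i) {(0 : ℂ)}ᶜ ∧
    (∀ z : ℂ, z ≠ 0 →
      lap (u i) z + ∑ j ∈ Finset.Icc 1 n, cartan i j * Real.exp (u j z) = 0) ∧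
    (∃ ε > (0:ℝ), ∃ C : ℝ, ∀ z : ℂ, z ≠ 0 → ‖z‖ < ε →
      |u i z - 2 * γ i * Real.log (‖z‖)| ≤ C) ∧
    MeasureTheory.Integrable (fun z : ℂ => Real.exp (u i z))

/-- `det_k(f)`: the determinant of the `k×k` matrix `(∂_z^p ∂_z̄^q f)_{0 ≤ p,q ≤ k−1}`,
with `det_0(f) = 1`. -/
def detk (k : ℕ) (f : ℂ → ℂ) (z : ℂ) : ℂ :=
  Matrix.det (Matrix.of fun p q : Fin k => wdz^[(p : ℕ)] (wdzbar^[(q : ℕ)] f) z)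

namespace Matrix

variable {R : Type*} [CommRing R] {m : Type*} [Fintype m] [DecidableEq m]

lemma mul_fromBlocks_one_adjugate (B : Matrix (m ⊕ Fin 2) (m ⊕ Fin 2) R) :
    B * fromBlocks 1 (B.adjugate.submatrix Sum.inl Sum.inr) 0
        (B.adjugate.submatrix Sum.inr Sum.inr) =
      fromBlocks (B.submatrix Sum.inl Sum.inl) 0 (B.submatrix Sum.inr Sum.inl) (B.det • 1) := by
  have hadj := congrFun₂ (mul_adjugate B)
  ext (i | i) (j | j)
  · simp [mul_apply, Fintype.sum_sum_type, one_apply]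
  · simpa [mul_apply, Fintype.sum_sum_type] using hadj (.inl i) (.inr j)
  · simp [mul_apply, Fintype.sum_sum_type, one_apply]
  · simpa [mul_apply, Fintype.sum_sum_type, one_apply] using hadj (.inr i) (.inr j)

/-- Jacobi's complementary minor theorem for a `2 × 2` block of the adjugate. -/
theorem det_adjugate_submatrix_inr (B : Matrix (m ⊕ Fin 2) (m ⊕ Fin 2) R) :
    (B.adjugate.submatrix Sum.inr Sum.inr).det = B.det * (B.submatrix Sum.inl Sum.inl).det := by
  suffices generic : ∀ B : Matrix (m ⊕ Fin 2) (m ⊕ Fin 2)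
      (MvPolynomial ((m ⊕ Fin 2) × (m ⊕ Fin 2)) ℤ), B.det ≠ 0 →
        (B.adjugate.submatrix Sum.inr Sum.inr).det = B.det * (B.submatrix Sum.inl Sum.inl).det by
    have h := congrArg (MvPolynomial.eval₂Hom (Int.castRingHom R) fun p => B p.1 p.2)
      (generic _ (det_mvPolynomialX_ne_zero _ ℤ))
    rw [map_mul, RingHom.map_det, RingHom.map_det, RingHom.map_det, RingHom.mapMatrix_apply,
      RingHom.mapMatrix_apply, RingHom.mapMatrix_apply, ← submatrix_map, ← submatrix_map,
      ← RingHom.mapMatrix_apply, RingHom.map_adjugate, RingHom.mapMatrix_apply,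
      MvPolynomial.coe_eval₂Hom, mvPolynomialX_map_eval₂] at h
    exact h
  intro B hB
  have key := congrArg det (mul_fromBlocks_one_adjugate B)
  rw [det_mul, det_fromBlocks_zero₂₁, det_fromBlocks_zero₁₂, det_smul, det_one, det_one,
    Fintype.card_fin] at key
  exact mul_left_cancel₀ hB (by linear_combination key)

theorem desnanot_jacobi {n : ℕ} (A : Matrix (Fin (n + 2)) (Fin (n + 2)) R) :
    A.det * (A.submatrix (Fin.castSucc ∘ Fin.castSucc) (Fin.castSucc ∘ Fin.castSucc)).det =
      (A.submatrix Fin.castSucc Fin.castSucc).det *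
          (A.submatrix (Fin.last n).castSucc.succAbove (Fin.last n).castSucc.succAbove).det -
        (A.submatrix (Fin.last n).castSucc.succAbove Fin.castSucc).det *
          (A.submatrix Fin.castSucc (Fin.last n).castSucc.succAbove).det := by
  set e : Fin n ⊕ Fin 2 ≃ Fin (n + 2) := finSumFinEquiv
  have jacobi := det_adjugate_submatrix_inr (A.submatrix e e)
  have he_inl : e ∘ Sum.inl = Fin.castSucc ∘ Fin.castSucc := by
    funext i; ext; simp [e]
  have he_inr : e ∘ Sum.inr = ![(Fin.last n).castSucc, Fin.last (n + 1)] := by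
    funext i; fin_cases i <;> ext <;> simp [e]
  rw [det_submatrix_equiv_self, adjugate_submatrix_equiv_self, submatrix_submatrix,
    submatrix_submatrix, he_inl, he_inr, det_fin_two] at jacobi
  simp only [submatrix_apply, cons_val_zero, cons_val_one,
    adjugate_fin_succ_eq_det_submatrix, Fin.succAbove_last, Fin.val_last,
    Fin.val_castSucc] at jacobi
  rw [← jacobi]
  have hodd : (-1 : R) ^ (n + 1 + n) = -1 := Odd.neg_one_pow ⟨n, by ring⟩
  have hodd' : (-1 : R) ^ (n + (n + 1)) = -1 := Odd.neg_one_pow ⟨n, by ring⟩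
  rw [hodd, hodd', Even.neg_one_pow ⟨n, rfl⟩, Even.neg_one_pow ⟨n + 1, rfl⟩]
  ring

variable {α : Type*} {n : ℕ}

lemma sum_det_submatrix_update_succ (M : Matrix α ℕ R) (r : Fin (n + 1) → α) :
    ∑ j : Fin (n + 1), (M.submatrix r (Function.update Fin.val j ((j : ℕ) + 1))).det =
      (M.submatrix r (Fin.val ∘ (Fin.last n).castSucc.succAbove)).det := by
  rw [Finset.sum_eq_single_of_mem (Fin.last n) (Finset.mem_univ _)]
  · congr 2
    funext q
    rcases eq_or_ne q (Fin.last n) with rfl | hq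
    · simp
    · have hlt : q.castSucc < (Fin.last n).castSucc :=
        Fin.castSucc_lt_castSucc_iff.mpr (Fin.lt_last_iff_ne_last.mpr hq)
      simp [hq, Fin.succAbove_of_castSucc_lt _ _ hlt]
  · intro j _ hj
    have hjn : (j : ℕ) < n := Fin.lt_last_iff_ne_last.mpr hj
    refine det_zero_of_column_eq (i := j) (j := ⟨j + 1, by omega⟩) (by simp [Fin.ext_iff]) ?_
    intro i
    simp [Fin.ext_iff]

lemma sum_det_submatrix_update_succ_row (M : Matrix ℕ α R) (c : Fin (n + 1) → α) :
    ∑ i : Fin (n + 1), (M.submatrix (Function.update Fin.val i ((i : ℕ) + 1)) c).det =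
      (M.submatrix (Fin.val ∘ (Fin.last n).castSucc.succAbove) c).det := by
  simpa only [← transpose_submatrix, det_transpose] using sum_det_submatrix_update_succ Mᵀ c

end Matrix

open Matrix

theorem fderiv_det_apply {𝕜 E 𝔸 ι : Type*} [NontriviallyNormedField 𝕜] [NormedAddCommGroup E]
    [NormedSpace 𝕜 E] [NormedCommRing 𝔸] [NormedAlgebra 𝕜 𝔸] [Fintype ι] [DecidableEq ι]
    {M : ι → ι → E → 𝔸} {x : E} (hM : ∀ i j, DifferentiableAt 𝕜 (M i j) x) (v : E) :
    fderiv 𝕜 (fun y => (of fun i j => M i j y).det) x v =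
      ∑ j, ((of fun i j => M i j x).updateCol j fun i => fderiv 𝕜 (M i j) x v).det := by
  have hexp : (fun y => (of fun i j => M i j y).det) =
      fun y => ∑ σ : Equiv.Perm ι, (Equiv.Perm.sign σ : 𝔸) * ∏ i, M (σ i) i y :=
    funext fun y => det_apply' _
  have hderiv := HasFDerivAt.fun_sum fun σ (_ : σ ∈ univ) =>
    (HasFDerivAt.finsetProd fun i (_ : i ∈ univ) => (hM (σ i) i).hasFDerivAt).const_mul
      (Equiv.Perm.sign σ : 𝔸)
  rw [hexp, hderiv.fderiv]
  simp only [det_apply', updateCol_apply, of_apply, _root_.sum_apply, _root_.smul_apply,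
    smul_eq_mul, Finset.mul_sum]
  rw [Finset.sum_comm]
  refine Finset.sum_congr rfl fun j _ => Finset.sum_congr rfl fun σ _ => ?_
  rw [← Finset.mul_prod_erase univ _ (mem_univ j), if_pos rfl,
    Finset.prod_congr rfl fun i hi => if_neg (Finset.ne_of_mem_erase hi)]
  ring

open scoped ContDiff Topology

def wirtinger (c : ℂ) (g : ℂ → ℂ) (z : ℂ) : ℂ :=
  (fderiv ℝ g z 1 + c * fderiv ℝ g z I) / 2

lemma wdz_eq_wirtinger : wdz = wirtinger (-I) := by
  funext g z
  simp only [wdz, wirtinger]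
  ring

lemma wdzbar_eq_wirtinger : wdzbar = wirtinger I := rfl

def wirtingerCLM (c : ℂ) : (ℂ →L[ℝ] ℂ) →L[ℝ] ℂ :=
  (2⁻¹ : ℂ) • (ContinuousLinearMap.apply ℝ ℂ 1 + c • ContinuousLinearMap.apply ℝ ℂ I)

lemma wirtingerCLM_apply (c : ℂ) (L : ℂ →L[ℝ] ℂ) : wirtingerCLM c L = (L 1 + c * L I) / 2 := by
  simp only [wirtingerCLM, _root_.smul_apply, _root_.add_apply, ContinuousLinearMap.apply_apply,
    smul_eq_mul]
  ring

lemma wirtinger_eq_comp (c : ℂ) (g : ℂ → ℂ) : wirtinger c g = wirtingerCLM c ∘ fderiv ℝ g :=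
  funext fun _ => (wirtingerCLM_apply c _).symm

section Wirtinger

variable {g h : ℂ → ℂ} {z : ℂ}

lemma wirtinger_congr (c : ℂ) (hgh : g =ᶠ[𝓝 z] h) : wirtinger c g z = wirtinger c h z := by
  simp only [wirtinger, hgh.fderiv_eq]

lemma wirtinger_det {ι : Type*} [Fintype ι] [DecidableEq ι] (c : ℂ) {M : ι → ι → ℂ → ℂ}
    (hM : ∀ i j, DifferentiableAt ℝ (M i j) z) :
    wirtinger c (fun w => (of fun i j => M i j w).det) z =
      ∑ j, ((of fun i j => M i j z).updateCol j fun i => wirtinger c (M i j) z).det := by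
  simp only [wirtinger, fderiv_det_apply hM, ← Finset.sum_add_distrib, Finset.mul_sum,
    Finset.sum_div]
  refine Finset.sum_congr rfl fun j _ => ?_
  have hcol : (fun i => (fderiv ℝ (M i j) z 1 + c * fderiv ℝ (M i j) z I) / 2) =
      (2⁻¹ : ℂ) • ((fun i => fderiv ℝ (M i j) z 1) + c • fun i => fderiv ℝ (M i j) z I) := by
    funext i
    simp only [Pi.smul_apply, Pi.add_apply, smul_eq_mul]
    ring
  rw [hcol, det_updateCol_smul, det_updateCol_add, det_updateCol_smul]
  ring

lemma wirtinger_det_row {ι : Type*} [Fintype ι] [DecidableEq ι] (c : ℂ) {M : ι → ι → ℂ → ℂ}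
    (hM : ∀ i j, DifferentiableAt ℝ (M i j) z) :
    wirtinger c (fun w => (of fun i j => M i j w).det) z =
      ∑ i, ((of fun i j => M i j z).updateRow i fun j => wirtinger c (M i j) z).det := by
  have htranspose (w : ℂ) : (of fun i j => M i j w).det = (of fun i j => M j i w).det := by
    rw [← det_transpose]
    rfl
  simp only [htranspose, wirtinger_det c fun i j => hM j i]
  refine Finset.sum_congr rfl fun i _ => ?_
  rw [← det_transpose, ← updateRow_transpose]
  rfl

lemma ContDiffOn.wirtinger {Ω : Set ℂ} (hΩ : IsOpen Ω) (hg : ContDiffOn ℝ ∞ g Ω) (c : ℂ) :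
    ContDiffOn ℝ ∞ (wirtinger c g) Ω := by
  rw [wirtinger_eq_comp]
  exact (wirtingerCLM c).contDiff.comp_contDiffOn (hg.fderiv_of_isOpen hΩ (by simp))

lemma fderiv_wirtinger_apply (hg : DifferentiableAt ℝ (fderiv ℝ g) z) (c u : ℂ) :
    fderiv ℝ (wirtinger c g) z u = wirtingerCLM c (fderiv ℝ (fderiv ℝ g) z u) := by
  rw [wirtinger_eq_comp, ((wirtingerCLM c).hasFDerivAt.comp z hg.hasFDerivAt).fderiv]
  rfl

lemma wirtinger_comm (hg : ContDiffAt ℝ 2 g z) (c c' : ℂ) :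
    wirtinger c (wirtinger c' g) z = wirtinger c' (wirtinger c g) z := by
  have hDg : DifferentiableAt ℝ (fderiv ℝ g) z :=
    (hg.fderiv_right (m := 1) le_rfl).differentiableAt one_ne_zero
  have hsymm := (hg.isSymmSndFDerivAt (by simp)).eq 1 I
  simp only [wirtinger, fderiv_wirtinger_apply hDg, wirtingerCLM_apply]
  linear_combination (c' - c) / 4 * hsymm

end Wirtinger

def mixedWirtinger (f : ℂ → ℂ) (p q : ℕ) : ℂ → ℂ := wdz^[p] (wdzbar^[q] f)

lemma mixedWirtinger_succ_left (f : ℂ → ℂ) (p q : ℕ) :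
    mixedWirtinger f (p + 1) q = wdz (mixedWirtinger f p q) :=
  Function.iterate_succ_apply' wdz p _

lemma mixedWirtinger_zero_succ (f : ℂ → ℂ) (q : ℕ) :
    mixedWirtinger f 0 (q + 1) = wdzbar (mixedWirtinger f 0 q) :=
  Function.iterate_succ_apply' wdzbar q f

section MixedWirtinger

variable {Ω : Set ℂ} {f : ℂ → ℂ} {z : ℂ}

lemma contDiffOn_mixedWirtinger (hΩ : IsOpen Ω) (hf : ContDiffOn ℝ ∞ f Ω) (p q : ℕ) :
    ContDiffOn ℝ ∞ (mixedWirtinger f p q) Ω := by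
  induction p with
  | zero =>
    induction q with
    | zero => exact hf
    | succ q ih =>
      rw [mixedWirtinger_zero_succ, wdzbar_eq_wirtinger]
      exact ih.wirtinger hΩ I
  | succ p ih =>
    rw [mixedWirtinger_succ_left, wdz_eq_wirtinger]
    exact ih.wirtinger hΩ (-I)

lemma differentiableAt_mixedWirtinger (hΩ : IsOpen Ω) (hf : ContDiffOn ℝ ∞ f Ω)
    (hz : z ∈ Ω) (p q : ℕ) : DifferentiableAt ℝ (mixedWirtinger f p q) z :=
  ((contDiffOn_mixedWirtinger hΩ hf p q).contDiffAt (hΩ.mem_nhds hz)).differentiableAt (by simp)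

lemma wdzbar_mixedWirtinger (hΩ : IsOpen Ω) (hf : ContDiffOn ℝ ∞ f Ω) (hz : z ∈ Ω) (p q : ℕ) :
    wdzbar (mixedWirtinger f p q) z = mixedWirtinger f p (q + 1) z := by
  induction p generalizing z with
  | zero => rw [mixedWirtinger_zero_succ]
  | succ p ih =>
    have hsmooth : ContDiffAt ℝ 2 (mixedWirtinger f p q) z :=
      ((contDiffOn_mixedWirtinger hΩ hf p q).contDiffAt (hΩ.mem_nhds hz)).of_le
        (WithTop.coe_le_coe.mpr le_top)
    have hev : wdzbar (mixedWirtinger f p q) =ᶠ[𝓝 z] mixedWirtinger f p (q + 1) :=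
      Filter.eventually_of_mem (hΩ.mem_nhds hz) fun _ hw => ih hw
    rw [mixedWirtinger_succ_left, mixedWirtinger_succ_left, wdzbar_eq_wirtinger, wdz_eq_wirtinger,
      wirtinger_comm hsmooth, ← wdzbar_eq_wirtinger, wirtinger_congr _ hev]

end MixedWirtinger

def wirtingerMatrix (f : ℂ → ℂ) (z : ℂ) : Matrix ℕ ℕ ℂ :=
  Matrix.of fun p q => mixedWirtinger f p q z

section WirtingerMatrix

variable {Ω : Set ℂ} {f : ℂ → ℂ} {z : ℂ}

lemma wdzbar_det_submatrix_wirtingerMatrix (hΩ : IsOpen Ω) (hf : ContDiffOn ℝ ∞ f Ω)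
    (hz : z ∈ Ω) {m : ℕ} (r c : Fin m → ℕ) :
    wdzbar (fun w => ((wirtingerMatrix f w).submatrix r c).det) z =
      ∑ j, ((wirtingerMatrix f z).submatrix r (Function.update c j (c j + 1))).det := by
  rw [wdzbar_eq_wirtinger]
  refine (wirtinger_det I fun i j => differentiableAt_mixedWirtinger hΩ hf hz _ _).trans
    (Finset.sum_congr rfl fun j _ => congrArg det ?_)
  ext i k
  rcases eq_or_ne k j with rfl | hkj
  · simp [wirtingerMatrix, ← wdzbar_eq_wirtinger, wdzbar_mixedWirtinger hΩ hf hz]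
  · simp [wirtingerMatrix, hkj]

lemma wdz_det_submatrix_wirtingerMatrix (hΩ : IsOpen Ω) (hf : ContDiffOn ℝ ∞ f Ω)
    (hz : z ∈ Ω) {m : ℕ} (r c : Fin m → ℕ) :
    wdz (fun w => ((wirtingerMatrix f w).submatrix r c).det) z =
      ∑ i, ((wirtingerMatrix f z).submatrix (Function.update r i (r i + 1)) c).det := by
  rw [wdz_eq_wirtinger]
  refine (wirtinger_det_row (-I) fun i j => differentiableAt_mixedWirtinger hΩ hf hz _ _).trans
    (Finset.sum_congr rfl fun i _ => congrArg det ?_)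
  ext k j
  rcases eq_or_ne k i with rfl | hki
  · simp [wirtingerMatrix, ← wdz_eq_wirtinger, mixedWirtinger_succ_left]
  · simp [wirtingerMatrix, hki]

variable (n : ℕ)

lemma wdzbar_detk (hΩ : IsOpen Ω) (hf : ContDiffOn ℝ ∞ f Ω) (hz : z ∈ Ω) :
    wdzbar (fun w => detk (n + 1) f w) z =
      ((wirtingerMatrix f z).submatrix Fin.val (Fin.val ∘ (Fin.last n).castSucc.succAbove)).det :=
  (wdzbar_det_submatrix_wirtingerMatrix hΩ hf hz _ _).trans (sum_det_submatrix_update_succ _ _)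

lemma wdz_detk (hΩ : IsOpen Ω) (hf : ContDiffOn ℝ ∞ f Ω) (hz : z ∈ Ω) :
    wdz (fun w => detk (n + 1) f w) z =
      ((wirtingerMatrix f z).submatrix (Fin.val ∘ (Fin.last n).castSucc.succAbove) Fin.val).det :=
  (wdz_det_submatrix_wirtingerMatrix hΩ hf hz _ _).trans (sum_det_submatrix_update_succ_row _ _)

lemma wdz_wdzbar_detk (hΩ : IsOpen Ω) (hf : ContDiffOn ℝ ∞ f Ω) (hz : z ∈ Ω) :
    wdz (fun w => wdzbar (fun w' => detk (n + 1) f w') w) z =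
      ((wirtingerMatrix f z).submatrix (Fin.val ∘ (Fin.last n).castSucc.succAbove)
        (Fin.val ∘ (Fin.last n).castSucc.succAbove)).det := by
  have hev : (fun w => wdzbar (fun w' => detk (n + 1) f w') w) =ᶠ[𝓝 z]
      fun w => ((wirtingerMatrix f w).submatrix Fin.val
        (Fin.val ∘ (Fin.last n).castSucc.succAbove)).det :=
    Filter.eventually_of_mem (hΩ.mem_nhds hz) fun w hw => wdzbar_detk n hΩ hf hw
  rw [wdz_eq_wirtinger, wirtinger_congr _ hev, ← wdz_eq_wirtinger]
  exact (wdz_det_submatrix_wirtingerMatrix hΩ hf hz _ _).trans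
    (sum_det_submatrix_update_succ_row _ _)

end WirtingerMatrix

/-- For a smooth complex-valued function `f` on an open subset of
`ℂ` and every `k ≥ 1`,
`det_{k+1}(f)·det_{k−1}(f) = det_k(f)·∂_z∂_z̄(det_k(f)) − ∂_z(det_k(f))·∂_z̄(det_k(f))`. -/
theorem detk_recursion (Ω : Set ℂ) (hΩ : IsOpen Ω)
    (f : ℂ → ℂ) (hf : ContDiffOn ℝ (⊤ : ℕ∞) f Ω) (k : ℕ) (hk : 1 ≤ k) :
    ∀ z ∈ Ω,
      detk (k + 1) f z * detk (k - 1) f z =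
        detk k f z * wdz (fun w => wdzbar (fun w' => detk k f w') w) z
          - wdz (fun w => detk k f w) z * wdzbar (fun w => detk k f w) z := by
  obtain ⟨n, rfl⟩ : ∃ n, k = n + 1 := ⟨k - 1, by omega⟩
  intro z hz
  rw [wdz_wdzbar_detk n hΩ hf hz, wdz_detk n hΩ hf hz, wdzbar_detk n hΩ hf hz]
  exact Matrix.desnanot_jacobi ((wirtingerMatrix f z).submatrix Fin.val Fin.val)
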